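/- arXiv:2304.11930 — 2 statements merged into one kernel-verified Lean document; each statement's English description precedes it below -/
import Mathlib

section
/- Let σ₁, σ₂ > 0 and let M be a symmetric positive semidefinite N×N matrix. Among all k ∈ ℝ, the expected loss E[((k-1)Δt + kΔT)^T M ((k-1)Δt + kΔT)] (with Δt, ΔT i.i.d. mean-zero vectors of variances σ₁², σ₂² as above, and tr(M) > 0) is minimized exactly at k = σ₁²/(σ₁² + σ₂²), where it equals σ₁² σ₂² tr(M)/(σ₁² + σ₂²). -/
open Matrix MeasureTheory ProbabilityTheory

theorem stmt_10 {Ω : Type*} [MeasurableSpace Ω] (μ : Measure Ω) [IsProbabilityMeasure μ]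
    {N : ℕ} (Δt ΔT : Fin N → Ω → ℝ) (σ₁ σ₂ : ℝ) (h₁ : 0 < σ₁) (h₂ : 0 < σ₂)
    (hmeas₁ : ∀ i, Measurable (Δt i)) (hmeas₂ : ∀ i, Measurable (ΔT i))
    (hindep : iIndepFun (β := fun _ : Fin N ⊕ Fin N => ℝ)
      (Sum.elim Δt ΔT) μ)
    (hid₁ : ∀ i j, IdentDistrib (Δt i) (Δt j) μ μ)
    (hid₂ : ∀ i j, IdentDistrib (ΔT i) (ΔT j) μ μ)
    (hmean₁ : ∀ i, ∫ ω, Δt i ω ∂μ = 0) (hmean₂ : ∀ i, ∫ ω, ΔT i ω ∂μ = 0)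
    (hvar₁ : ∀ i, ∫ ω, (Δt i ω)^2 ∂μ = σ₁^2)
    (hvar₂ : ∀ i, ∫ ω, (ΔT i ω)^2 ∂μ = σ₂^2)
    (M : Matrix (Fin N) (Fin N) ℝ) (hM : M.PosSemidef) (htr : 0 < M.trace)
    (L : ℝ → ℝ)
    (hL : ∀ k, L k = ∫ ω, (fun i => (k - 1) * Δt i ω + k * ΔT i ω) ⬝ᵥ
        (M *ᵥ fun i => (k - 1) * Δt i ω + k * ΔT i ω) ∂μ) :
    L (σ₁^2 / (σ₁^2 + σ₂^2)) = σ₁^2 * σ₂^2 * M.trace / (σ₁^2 + σ₂^2) ∧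
      ∀ k : ℝ, k ≠ σ₁^2 / (σ₁^2 + σ₂^2) → L (σ₁^2 / (σ₁^2 + σ₂^2)) < L k := by
  -- squares are integrable
  have hsq₁ : ∀ i, Integrable (fun ω => (Δt i ω)^2) μ := by
    intro i
    by_contra h
    have := integral_undef h
    rw [hvar₁ i] at this
    nlinarith
  have hsq₂ : ∀ i, Integrable (fun ω => (ΔT i ω)^2) μ := by
    intro i
    by_contra h
    have := integral_undef h
    rw [hvar₂ i] at this
    nlinarith
  have hm2₁ : ∀ i, MemLp (Δt i) 2 μ := fun i =>
    (memLp_two_iff_integrable_sq (hmeas₁ i).aestronglyMeasurable).mpr (hsq₁ i)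
  have hm2₂ : ∀ i, MemLp (ΔT i) 2 μ := fun i =>
    (memLp_two_iff_integrable_sq (hmeas₂ i).aestronglyMeasurable).mpr (hsq₂ i)
  have hint₁ : ∀ i, Integrable (Δt i) μ := fun i => (hm2₁ i).integrable one_le_two
  have hint₂ : ∀ i, Integrable (ΔT i) μ := fun i => (hm2₂ i).integrable one_le_two
  have hpair : ∀ a b : Fin N ⊕ Fin N, a ≠ b →
      IndepFun (Sum.elim Δt ΔT a) (Sum.elim Δt ΔT b) μ := fun _ _ h => hindep.indepFun h
  -- integrability of all pairwise products
  have P₁₁ : ∀ i j, Integrable (fun ω => Δt i ω * Δt j ω) μ := by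
    intro i j
    by_cases h : i = j
    · subst h; simpa [sq] using hsq₁ i
    · exact (hpair (.inl i) (.inl j) (by simp [h])).integrable_mul (hint₁ i) (hint₁ j)
  have P₂₂ : ∀ i j, Integrable (fun ω => ΔT i ω * ΔT j ω) μ := by
    intro i j
    by_cases h : i = j
    · subst h; simpa [sq] using hsq₂ i
    · exact (hpair (.inr i) (.inr j) (by simp [h])).integrable_mul (hint₂ i) (hint₂ j)
  have P₁₂ : ∀ i j, Integrable (fun ω => Δt i ω * ΔT j ω) μ := fun i j =>
    (hpair (.inl i) (.inr j) (by simp)).integrable_mul (hint₁ i) (hint₂ j)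
  have P₂₁ : ∀ i j, Integrable (fun ω => ΔT i ω * Δt j ω) μ := fun i j =>
    (hpair (.inr i) (.inl j) (by simp)).integrable_mul (hint₂ i) (hint₁ j)
  -- values of all pairwise expectations
  have E₁₁ : ∀ i j, ∫ ω, Δt i ω * Δt j ω ∂μ = if i = j then σ₁^2 else 0 := by
    intro i j
    by_cases h : i = j
    · subst h; simp only [if_pos rfl, ← hvar₁ i]; congr 1; funext ω; ring
    · rw [if_neg h]
      have := (hpair (.inl i) (.inl j) (by simp [h])).integral_mul_eq_mul_integral
        (hmeas₁ i).aestronglyMeasurable (hmeas₁ j).aestronglyMeasurable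
      simpa [Pi.mul_apply, hmean₁ i, hmean₁ j] using this
  have E₂₂ : ∀ i j, ∫ ω, ΔT i ω * ΔT j ω ∂μ = if i = j then σ₂^2 else 0 := by
    intro i j
    by_cases h : i = j
    · subst h; simp only [if_pos rfl, ← hvar₂ i]; congr 1; funext ω; ring
    · rw [if_neg h]
      have := (hpair (.inr i) (.inr j) (by simp [h])).integral_mul_eq_mul_integral
        (hmeas₂ i).aestronglyMeasurable (hmeas₂ j).aestronglyMeasurable
      simpa [Pi.mul_apply, hmean₂ i, hmean₂ j] using this
  have E₁₂ : ∀ i j, ∫ ω, Δt i ω * ΔT j ω ∂μ = 0 := by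
    intro i j
    have := (hpair (.inl i) (.inr j) (by simp)).integral_mul_eq_mul_integral
      (hmeas₁ i).aestronglyMeasurable (hmeas₂ j).aestronglyMeasurable
    simpa [Pi.mul_apply, hmean₁ i, hmean₂ j] using this
  have E₂₁ : ∀ i j, ∫ ω, ΔT i ω * Δt j ω ∂μ = 0 := by
    intro i j
    have := (hpair (.inr i) (.inl j) (by simp)).integral_mul_eq_mul_integral
      (hmeas₂ i).aestronglyMeasurable (hmeas₁ j).aestronglyMeasurable
    simpa [Pi.mul_apply, hmean₂ i, hmean₁ j] using this
  -- expectation of products of the combined variables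
  have hXX : ∀ (k : ℝ) i j, Integrable
      (fun ω => ((k - 1) * Δt i ω + k * ΔT i ω) * ((k - 1) * Δt j ω + k * ΔT j ω)) μ := by
    intro k i j
    have : (fun ω => ((k - 1) * Δt i ω + k * ΔT i ω) * ((k - 1) * Δt j ω + k * ΔT j ω))
        = fun ω => (k - 1)^2 * (Δt i ω * Δt j ω) + (((k - 1) * k) * (Δt i ω * ΔT j ω)
          + ((k * (k - 1)) * (ΔT i ω * Δt j ω) + k^2 * (ΔT i ω * ΔT j ω))) := by
      funext ω; ring
    rw [this]
    exact ((P₁₁ i j).const_mul _).add (((P₁₂ i j).const_mul _).add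
      (((P₂₁ i j).const_mul _).add ((P₂₂ i j).const_mul _)))
  have hE : ∀ (k : ℝ) i j,
      ∫ ω, ((k - 1) * Δt i ω + k * ΔT i ω) * ((k - 1) * Δt j ω + k * ΔT j ω) ∂μ
        = if i = j then (k - 1)^2 * σ₁^2 + k^2 * σ₂^2 else 0 := by
    intro k i j
    have heq : (fun ω => ((k - 1) * Δt i ω + k * ΔT i ω) * ((k - 1) * Δt j ω + k * ΔT j ω))
        = fun ω => (k - 1)^2 * (Δt i ω * Δt j ω) + (((k - 1) * k) * (Δt i ω * ΔT j ω)
          + ((k * (k - 1)) * (ΔT i ω * Δt j ω) + k^2 * (ΔT i ω * ΔT j ω))) := by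
      funext ω; ring
    rw [show (∫ ω, ((k - 1) * Δt i ω + k * ΔT i ω) * ((k - 1) * Δt j ω + k * ΔT j ω) ∂μ)
        = ∫ ω, ((k - 1)^2 * (Δt i ω * Δt j ω) + (((k - 1) * k) * (Δt i ω * ΔT j ω)
          + ((k * (k - 1)) * (ΔT i ω * Δt j ω) + k^2 * (ΔT i ω * ΔT j ω)))) ∂μ from by
        rw [heq]]
    rw [integral_add ((P₁₁ i j).const_mul _)
        (show Integrable (fun ω => ((k - 1) * k * (Δt i ω * ΔT j ω)
          + (k * (k - 1) * (ΔT i ω * Δt j ω) + k^2 * (ΔT i ω * ΔT j ω)))) μ from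
          ((P₁₂ i j).const_mul _).add (((P₂₁ i j).const_mul _).add ((P₂₂ i j).const_mul _))),
      integral_add ((P₁₂ i j).const_mul _)
        (show Integrable (fun ω => (k * (k - 1) * (ΔT i ω * Δt j ω)
          + k^2 * (ΔT i ω * ΔT j ω))) μ from
          ((P₂₁ i j).const_mul _).add ((P₂₂ i j).const_mul _)),
      integral_add ((P₂₁ i j).const_mul _) ((P₂₂ i j).const_mul _),
      integral_const_mul, integral_const_mul, integral_const_mul, integral_const_mul,
      E₁₁, E₂₂, E₁₂, E₂₁]
    by_cases h : i = j <;> simp [h]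
  -- the closed form for L
  have hLk : ∀ k : ℝ, L k = ((k - 1)^2 * σ₁^2 + k^2 * σ₂^2) * M.trace := by
    intro k
    rw [hL k]
    have hdot : ∀ ω : Ω, ((fun i => (k - 1) * Δt i ω + k * ΔT i ω) ⬝ᵥ
        (M *ᵥ fun i => (k - 1) * Δt i ω + k * ΔT i ω))
        = ∑ i, ∑ j, M i j * (((k - 1) * Δt i ω + k * ΔT i ω) *
            ((k - 1) * Δt j ω + k * ΔT j ω)) := by
      intro ω
      simp only [dotProduct, mulVec, Finset.mul_sum]
      refine Finset.sum_congr rfl fun i _ => Finset.sum_congr rfl fun j _ => by ring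
    rw [show (∫ ω, (fun i => (k - 1) * Δt i ω + k * ΔT i ω) ⬝ᵥ
        (M *ᵥ fun i => (k - 1) * Δt i ω + k * ΔT i ω) ∂μ)
        = ∫ ω, ∑ i, ∑ j, M i j * (((k - 1) * Δt i ω + k * ΔT i ω) *
            ((k - 1) * Δt j ω + k * ΔT j ω)) ∂μ from by
      congr 1; funext ω; exact hdot ω]
    rw [integral_finset_sum _ fun i _ =>
      integrable_finset_sum _ fun j _ => (hXX k i j).const_mul (M i j)]
    have : ∀ i ∈ Finset.univ, (∫ ω, ∑ j, M i j * (((k - 1) * Δt i ω + k * ΔT i ω) *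
        ((k - 1) * Δt j ω + k * ΔT j ω)) ∂μ)
        = ∑ j, M i j * (if i = j then (k - 1)^2 * σ₁^2 + k^2 * σ₂^2 else 0) := by
      intro i _
      rw [integral_finset_sum _ fun j _ => (hXX k i j).const_mul (M i j)]
      exact Finset.sum_congr rfl fun j _ => by rw [integral_const_mul, hE]
    rw [Finset.sum_congr rfl this]
    simp only [mul_ite, mul_zero, Finset.sum_ite_eq, Finset.mem_univ, if_true]
    rw [Matrix.trace, Finset.mul_sum]
    exact Finset.sum_congr rfl fun i _ => by rw [Matrix.diag_apply]; ring
  -- the one-dimensional minimization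
  have hs : (0:ℝ) < σ₁^2 + σ₂^2 := by positivity
  have hs' : σ₁^2 + σ₂^2 ≠ 0 := ne_of_gt hs
  constructor
  · rw [hLk]
    field_simp
    ring
  · intro k hk
    rw [hLk, hLk]
    have hk0 : k - σ₁^2 / (σ₁^2 + σ₂^2) ≠ 0 := sub_ne_zero.mpr hk
    have hsq : 0 < (k - σ₁^2 / (σ₁^2 + σ₂^2))^2 :=
      lt_of_le_of_ne (sq_nonneg _) (Ne.symm (pow_ne_zero 2 hk0))
    have key : ((k - 1)^2 * σ₁^2 + k^2 * σ₂^2)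
        - ((σ₁^2 / (σ₁^2 + σ₂^2) - 1)^2 * σ₁^2 + (σ₁^2 / (σ₁^2 + σ₂^2))^2 * σ₂^2)
        = (σ₁^2 + σ₂^2) * (k - σ₁^2 / (σ₁^2 + σ₂^2))^2 := by
      field_simp
      ring
    have hpos : 0 < (σ₁^2 + σ₂^2) * (k - σ₁^2 / (σ₁^2 + σ₂^2))^2 := mul_pos hs hsq
    have : ((σ₁^2 / (σ₁^2 + σ₂^2) - 1)^2 * σ₁^2 + (σ₁^2 / (σ₁^2 + σ₂^2))^2 * σ₂^2)
        < ((k - 1)^2 * σ₁^2 + k^2 * σ₂^2) := by linarith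
    exact mul_lt_mul_of_pos_right this htr
end

section
/- Suppose in the degenerate case N = 2 with M = (1/2)[[1,-1],[-1,1]], the predictions are y_i = k(t_0 + Δt_i + ΔT_i) + b - Δt_i for i = 0, 1, with Δt_0, Δt_1, ΔT_0, ΔT_1 independent, the Δt_i of mean 0 and variance σ₁² and the ΔT_i of mean 0 and variance σ₂². Then E[Y^T M Y] = (k-1)²σ₁² + k²σ₂², which is minimized over k at k = σ₁²/(σ₁²+σ₂²) with minimum σ₁²σ₂²/(σ₁²+σ₂²). -/
open Matrix MeasureTheory ProbabilityTheory

theorem stmt_13 {Ω : Type*} [MeasurableSpace Ω] (μ : Measure Ω) [IsProbabilityMeasure μ]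
    (Δt ΔT : Fin 2 → Ω → ℝ) (σ₁ σ₂ : ℝ) (h₁ : 0 < σ₁) (h₂ : 0 < σ₂)
    (hmeas₁ : ∀ i, Measurable (Δt i)) (hmeas₂ : ∀ i, Measurable (ΔT i))
    (hindep : iIndepFun (m := fun _ : Fin 2 ⊕ Fin 2 => (inferInstance : MeasurableSpace ℝ))
      (Sum.elim Δt ΔT) μ)
    (hmean₁ : ∀ i, ∫ ω, Δt i ω ∂μ = 0) (hmean₂ : ∀ i, ∫ ω, ΔT i ω ∂μ = 0)
    (hvar₁ : ∀ i, ∫ ω, (Δt i ω)^2 ∂μ = σ₁^2)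
    (hvar₂ : ∀ i, ∫ ω, (ΔT i ω)^2 ∂μ = σ₂^2)
    (M : Matrix (Fin 2) (Fin 2) ℝ) (hM : M = (1/2 : ℝ) • !![1, -1; -1, 1])
    (t₀ b k : ℝ) (y : Fin 2 → Ω → ℝ)
    (hy : ∀ i ω, y i ω = k * (t₀ + Δt i ω + ΔT i ω) + b - Δt i ω)
    (g : ℝ → ℝ) (hg : ∀ k', g k' = (k' - 1)^2 * σ₁^2 + k'^2 * σ₂^2) :
    (∫ ω, (fun i => y i ω) ⬝ᵥ (M *ᵥ fun i => y i ω) ∂μ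
        = (k - 1)^2 * σ₁^2 + k^2 * σ₂^2) ∧
      (∀ k' : ℝ, g (σ₁^2 / (σ₁^2 + σ₂^2)) ≤ g k') ∧
      g (σ₁^2 / (σ₁^2 + σ₂^2)) = σ₁^2 * σ₂^2 / (σ₁^2 + σ₂^2) := by
  have hs : 0 < σ₁^2 + σ₂^2 := by positivity
  have hmin : g (σ₁^2 / (σ₁^2 + σ₂^2)) = σ₁^2 * σ₂^2 / (σ₁^2 + σ₂^2) := by
    rw [hg]; field_simp; ring
  refine ⟨?_, ?_, hmin⟩
  · -- integrability of squares
    have hsq₁ : ∀ i, Integrable (fun ω => (Δt i ω)^2) μ := by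
      intro i
      by_contra h
      have := hvar₁ i
      rw [integral_undef h] at this
      nlinarith
    have hsq₂ : ∀ i, Integrable (fun ω => (ΔT i ω)^2) μ := by
      intro i
      by_contra h
      have := hvar₂ i
      rw [integral_undef h] at this
      nlinarith
    have hL₁ : ∀ i, MemLp (Δt i) 2 μ := fun i =>
      (memLp_two_iff_integrable_sq (hmeas₁ i).aestronglyMeasurable).2 (hsq₁ i)
    have hL₂ : ∀ i, MemLp (ΔT i) 2 μ := fun i =>
      (memLp_two_iff_integrable_sq (hmeas₂ i).aestronglyMeasurable).2 (hsq₂ i)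
    have hint₁ : ∀ i, Integrable (Δt i) μ := fun i => (hL₁ i).integrable one_le_two
    have hint₂ : ∀ i, Integrable (ΔT i) μ := fun i => (hL₂ i).integrable one_le_two
    -- pairwise independence
    have I : ∀ (p q : Fin 2 ⊕ Fin 2), p ≠ q →
        IndepFun (Sum.elim Δt ΔT p) (Sum.elim Δt ΔT q) μ := fun p q h => hindep.indepFun h
    have Itt : IndepFun (Δt 0) (Δt 1) μ := I (.inl 0) (.inl 1) (by simp)
    have ITT : IndepFun (ΔT 0) (ΔT 1) μ := I (.inr 0) (.inr 1) (by simp)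
    have ItT : ∀ i j, IndepFun (Δt i) (ΔT j) μ := fun i j => I (.inl i) (.inr j) (by simp)
    -- product integrals vanish
    have mtt : ∫ ω, Δt 0 ω * Δt 1 ω ∂μ = 0 := by
      have := Itt.integral_mul_eq_mul_integral (hmeas₁ 0).aestronglyMeasurable (hmeas₁ 1).aestronglyMeasurable
      simpa [Pi.mul_apply, hmean₁] using this
    have mTT : ∫ ω, ΔT 0 ω * ΔT 1 ω ∂μ = 0 := by
      have := ITT.integral_mul_eq_mul_integral (hmeas₂ 0).aestronglyMeasurable (hmeas₂ 1).aestronglyMeasurable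
      simpa [Pi.mul_apply, hmean₂] using this
    have mtT : ∀ i j, ∫ ω, Δt i ω * ΔT j ω ∂μ = 0 := by
      intro i j
      have := (ItT i j).integral_mul_eq_mul_integral (hmeas₁ i).aestronglyMeasurable
        (hmeas₂ j).aestronglyMeasurable
      simpa [Pi.mul_apply, hmean₁, hmean₂] using this
    -- integrability of products
    have itt : Integrable (fun ω => Δt 0 ω * Δt 1 ω) μ := Itt.integrable_mul (hint₁ 0) (hint₁ 1)
    have iTT : Integrable (fun ω => ΔT 0 ω * ΔT 1 ω) μ := ITT.integrable_mul (hint₂ 0) (hint₂ 1)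
    have itT : ∀ i j, Integrable (fun ω => Δt i ω * ΔT j ω) μ := fun i j =>
      (ItT i j).integrable_mul (hint₁ i) (hint₂ j)
    -- matrix entries
    have hM00 : M 0 0 = 1/2 := by simp [hM]
    have hM01 : M 0 1 = -(1/2) := by norm_num [hM]
    have hM10 : M 1 0 = -(1/2) := by norm_num [hM]
    have hM11 : M 1 1 = 1/2 := by simp [hM]
    -- rewrite integrand
    have hform : ∀ ω, (fun i => y i ω) ⬝ᵥ (M *ᵥ fun i => y i ω)
        = ((((((((((((k-1)^2/2) * (Δt 0 ω)^2 + ((k-1)^2/2) * (Δt 1 ω)^2)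
          + (k^2/2) * (ΔT 0 ω)^2) + (k^2/2) * (ΔT 1 ω)^2)
          - (k-1)^2 * (Δt 0 ω * Δt 1 ω)) - k^2 * (ΔT 0 ω * ΔT 1 ω))
          + (k*(k-1)) * (Δt 0 ω * ΔT 0 ω)) - (k*(k-1)) * (Δt 0 ω * ΔT 1 ω))
          - (k*(k-1)) * (Δt 1 ω * ΔT 0 ω)) + (k*(k-1)) * (Δt 1 ω * ΔT 1 ω))) := by
      intro ω
      simp only [dotProduct, Matrix.mulVec, Fin.sum_univ_two, hM00, hM01, hM10, hM11, hy]
      ring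
    have i1 : Integrable (fun ω => ((k-1)^2/2) * (Δt 0 ω)^2) μ := (hsq₁ 0).const_mul _
    have i2 : Integrable (fun ω => ((k-1)^2/2) * (Δt 1 ω)^2) μ := (hsq₁ 1).const_mul _
    have i3 : Integrable (fun ω => (k^2/2) * (ΔT 0 ω)^2) μ := (hsq₂ 0).const_mul _
    have i4 : Integrable (fun ω => (k^2/2) * (ΔT 1 ω)^2) μ := (hsq₂ 1).const_mul _
    have i5 : Integrable (fun ω => (k-1)^2 * (Δt 0 ω * Δt 1 ω)) μ := itt.const_mul _
    have i6 : Integrable (fun ω => k^2 * (ΔT 0 ω * ΔT 1 ω)) μ := iTT.const_mul _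
    have i7 : Integrable (fun ω => (k*(k-1)) * (Δt 0 ω * ΔT 0 ω)) μ := (itT 0 0).const_mul _
    have i8 : Integrable (fun ω => (k*(k-1)) * (Δt 0 ω * ΔT 1 ω)) μ := (itT 0 1).const_mul _
    have i9 : Integrable (fun ω => (k*(k-1)) * (Δt 1 ω * ΔT 0 ω)) μ := (itT 1 0).const_mul _
    have i10 : Integrable (fun ω => (k*(k-1)) * (Δt 1 ω * ΔT 1 ω)) μ := (itT 1 1).const_mul _
    have S2 : Integrable (fun ω => ((k-1)^2/2) * (Δt 0 ω)^2 + ((k-1)^2/2) * (Δt 1 ω)^2) μ := i1.add i2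
    have S3 : Integrable (fun ω => (((k-1)^2/2) * (Δt 0 ω)^2 + ((k-1)^2/2) * (Δt 1 ω)^2) + (k^2/2) * (ΔT 0 ω)^2) μ := S2.add i3
    have S4 : Integrable (fun ω => ((((k-1)^2/2) * (Δt 0 ω)^2 + ((k-1)^2/2) * (Δt 1 ω)^2) + (k^2/2) * (ΔT 0 ω)^2) + (k^2/2) * (ΔT 1 ω)^2) μ := S3.add i4
    have S5 : Integrable (fun ω => (((((k-1)^2/2) * (Δt 0 ω)^2 + ((k-1)^2/2) * (Δt 1 ω)^2) + (k^2/2) * (ΔT 0 ω)^2) + (k^2/2) * (ΔT 1 ω)^2) - (k-1)^2 * (Δt 0 ω * Δt 1 ω)) μ := S4.sub i5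
    have S6 : Integrable (fun ω => ((((((k-1)^2/2) * (Δt 0 ω)^2 + ((k-1)^2/2) * (Δt 1 ω)^2) + (k^2/2) * (ΔT 0 ω)^2) + (k^2/2) * (ΔT 1 ω)^2) - (k-1)^2 * (Δt 0 ω * Δt 1 ω)) - k^2 * (ΔT 0 ω * ΔT 1 ω)) μ := S5.sub i6
    have S7 : Integrable (fun ω => (((((((k-1)^2/2) * (Δt 0 ω)^2 + ((k-1)^2/2) * (Δt 1 ω)^2) + (k^2/2) * (ΔT 0 ω)^2) + (k^2/2) * (ΔT 1 ω)^2) - (k-1)^2 * (Δt 0 ω * Δt 1 ω)) - k^2 * (ΔT 0 ω * ΔT 1 ω)) + (k*(k-1)) * (Δt 0 ω * ΔT 0 ω)) μ := S6.add i7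
    have S8 : Integrable (fun ω => ((((((((k-1)^2/2) * (Δt 0 ω)^2 + ((k-1)^2/2) * (Δt 1 ω)^2) + (k^2/2) * (ΔT 0 ω)^2) + (k^2/2) * (ΔT 1 ω)^2) - (k-1)^2 * (Δt 0 ω * Δt 1 ω)) - k^2 * (ΔT 0 ω * ΔT 1 ω)) + (k*(k-1)) * (Δt 0 ω * ΔT 0 ω)) - (k*(k-1)) * (Δt 0 ω * ΔT 1 ω)) μ := S7.sub i8
    have S9 : Integrable (fun ω => (((((((((k-1)^2/2) * (Δt 0 ω)^2 + ((k-1)^2/2) * (Δt 1 ω)^2) + (k^2/2) * (ΔT 0 ω)^2) + (k^2/2) * (ΔT 1 ω)^2) - (k-1)^2 * (Δt 0 ω * Δt 1 ω)) - k^2 * (ΔT 0 ω * ΔT 1 ω)) + (k*(k-1)) * (Δt 0 ω * ΔT 0 ω)) - (k*(k-1)) * (Δt 0 ω * ΔT 1 ω)) - (k*(k-1)) * (Δt 1 ω * ΔT 0 ω)) μ := S8.sub i9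
    rw [integral_congr_ae (Filter.Eventually.of_forall hform)]
    rw [integral_add S9 i10, integral_sub S8 i9, integral_sub S7 i8, integral_add S6 i7,
      integral_sub S5 i6, integral_sub S4 i5, integral_add S3 i4, integral_add S2 i3,
      integral_add i1 i2]
    simp only [integral_const_mul, hvar₁, hvar₂, mtt, mTT]
    rw [mtT 0 0, mtT 0 1, mtT 1 0, mtT 1 1]
    ring
  · intro k'
    rw [hmin, hg, div_le_iff₀ hs]
    nlinarith [sq_nonneg (k' * (σ₁^2 + σ₂^2) - σ₁^2)]
end
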